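/- Let C(Q) be the n×n circulant matrix of the first n Perrin numbers. Then for each j with w^{-3j} + w^{-2j} - 1 ≠ 0, the eigenvalue λ_j(C(Q)) = Σ_{k=0}^{n-1} Q_k w^{-jk} equals (Q_n - 3 + Q_{n+1} w^{-j} + (Q_{n-1} + 1) w^{-2j}) / (w^{-3j} + w^{-2j} - 1), where w = e^{2πi/n}. -/
import Mathlib


/-- The Perrin sequence: Q 0 = 3, Q 1 = 0, Q 2 = 2, Q (n+3) = Q (n+1) + Q n. -/
def perrin : ℕ → ℤ
  | 0 => 3
  | 1 => 0
  | 2 => 2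
  | (n + 3) => perrin (n + 1) + perrin n

lemma perrin_key (x : ℂ) : ∀ n : ℕ,
    (x ^ 3 + x ^ 2 - 1) * ∑ k ∈ Finset.range n, (perrin k : ℂ) * x ^ k =
      -3 + x ^ 2 + (perrin n : ℂ) * x ^ n + (perrin (n + 1) : ℂ) * x ^ (n + 1) +
        ((perrin (n + 2) : ℂ) - (perrin n : ℂ)) * x ^ (n + 2) := by
  intro n
  induction n with
  | zero => simp [perrin]; ring
  | succ m ih =>
    rw [Finset.sum_range_succ, mul_add, ih]
    have h3 : perrin (m + 3) = perrin (m + 1) + perrin m := rfl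
    push_cast [h3]
    ring

open Complex in
theorem eigenvalue_circulant_perrin
    (n : ℕ) (hn : 1 ≤ n) (j : ℕ) (hj : j < n)
    (w : ℂ) (hw : w = Complex.exp (2 * Real.pi * I / n))
    (hden : w ^ (-(3 * j : ℤ)) + w ^ (-(2 * j : ℤ)) - 1 ≠ 0) :
    ∑ k ∈ Finset.range n, (perrin k : ℂ) * w ^ (-(j * k : ℤ)) =
      ((perrin n : ℂ) - 3 + (perrin (n + 1) : ℂ) * w ^ (-(j : ℤ)) +
          ((perrin (n - 1) : ℂ) + 1) * w ^ (-(2 * j : ℤ))) /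
        (w ^ (-(3 * j : ℤ)) + w ^ (-(2 * j : ℤ)) - 1) := by
  have hw0 : w ≠ 0 := by rw [hw]; exact Complex.exp_ne_zero _
  have hwn : w ^ n = 1 := by
    rw [hw, ← Complex.exp_nat_mul]
    have hn0 : (n : ℂ) ≠ 0 := Nat.cast_ne_zero.mpr (by omega)
    rw [show ((n:ℂ) * (2 * Real.pi * I / n)) = 2 * Real.pi * I from by field_simp]
    exact Complex.exp_two_pi_mul_I
  set x : ℂ := w ^ (-(j : ℤ)) with hxdef
  have hxk : ∀ k : ℕ, w ^ (-(j * k : ℤ)) = x ^ k := by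
    intro k
    rw [hxdef, ← zpow_natCast (w ^ (-(j:ℤ))) k, ← zpow_mul]
    congr 1; ring
  have hx2 : w ^ (-(2 * j : ℤ)) = x ^ 2 := by
    have := hxk 2; rw [← this]; congr 1; ring
  have hx3 : w ^ (-(3 * j : ℤ)) = x ^ 3 := by
    have := hxk 3; rw [← this]; congr 1; ring
  have hxn : x ^ n = 1 := by
    rw [hxdef, ← zpow_natCast w n] at *
    rw [← zpow_natCast (w ^ (-(j:ℤ))) n, ← zpow_mul, mul_comm, zpow_mul, hwn, one_zpow]
  rw [hx2, hx3] at hden ⊢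
  simp only [hxk]
  rw [eq_div_iff hden, mul_comm _ (x ^ 3 + x ^ 2 - 1), perrin_key]
  obtain ⟨m, rfl⟩ : ∃ m, n = m + 1 := ⟨n - 1, by omega⟩
  have h3 : perrin (m + 3) = perrin (m + 1) + perrin m := rfl
  have hxn1 : x ^ (m + 1 + 1) = x := by rw [pow_succ, hxn, one_mul]
  have hxn2 : x ^ (m + 1 + 2) = x ^ 2 := by
    rw [show m + 1 + 2 = (m + 1) + 2 from rfl, pow_add, hxn, one_mul]
  rw [hxn, hxn1, hxn2]
  push_cast [h3]
  ring
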